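/- arXiv:2512.20608 — 4 statements merged into one kernel-verified Lean document; each statement's English description precedes it below -/
import Mathlib

section
/- Define f(x) = 2[x^{α+1} + (1-x)^{α+1}]² - [x^{2α+1} + (1-x)^{2α+1}] for a fixed real α > 0. Then for all x ∈ [0,1], f(x) ≥ 2^{-2α}, with equality at x = 1/2. -/
/-!
Since `x + (1 - x) = 1`, the identity `(x^(α+1))² = x · x^(2α+1)` turns `f` into
`(2x - 1)(x^(2α+1) - (1-x)^(2α+1)) + 4 (x(1-x))^(α+1)`. Substituting `x = (1 + t)/2` gives
`f(x) = 2^(-2α) g(t)` with `g(t) = t((1+t)^(2α+1) - (1-t)^(2α+1))/2 + (1-t²)^(α+1)`, which is even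
in `t`. For `0 ≤ t ≤ 1`, Bernoulli's inequality bounds `(1+t)^(2α+1)` and `(1-t²)^(α+1)` from
below and `(1-t)^(2α+1) ≤ 1 - t`; the three linear bounds add up to exactly `g(t) ≥ 1 = g(0)`.
-/

open Real

namespace PowerGap

variable {α : ℝ}

noncomputable def f (α x : ℝ) : ℝ :=
  2 * (x ^ (α + 1) + (1 - x) ^ (α + 1)) ^ 2 - (x ^ (2 * α + 1) + (1 - x) ^ (2 * α + 1))

noncomputable def g (α t : ℝ) : ℝ :=
  t * ((1 + t) ^ (2 * α + 1) - (1 - t) ^ (2 * α + 1)) / 2 + (1 - t ^ 2) ^ (α + 1)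

lemma sq_rpow_add_one {a : ℝ} (ha : 0 ≤ a) (hα : 0 ≤ α) :
    (a ^ (α + 1)) ^ 2 = a * a ^ (2 * α + 1) := by
  rw [sq, ← rpow_add' ha (by linarith), ← rpow_one_add' ha (by linarith)]
  ring_nf

lemma f_eq {x : ℝ} (hx₀ : 0 ≤ x) (hx₁ : x ≤ 1) (hα : 0 ≤ α) :
    f α x = (2 * x - 1) * (x ^ (2 * α + 1) - (1 - x) ^ (2 * α + 1))
      + 4 * (x * (1 - x)) ^ (α + 1) := by
  have hy : 0 ≤ 1 - x := by linarith
  have hsq := sq_rpow_add_one hx₀ hα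
  have hsq' := sq_rpow_add_one hy hα
  rw [f, mul_rpow hx₀ hy]
  linear_combination 2 * hsq + 2 * hsq'

lemma f_eq_g {x : ℝ} (hx₀ : 0 ≤ x) (hx₁ : x ≤ 1) (hα : 0 ≤ α) :
    f α x = 2 ^ (-(2 * α)) * g α (2 * x - 1) := by
  set t := 2 * x - 1
  have hx : x = (1 + t) / 2 := by ring
  have h1x : 1 - x = (1 - t) / 2 := by ring
  have hprod : x * (1 - x) = (1 - t ^ 2) / 2 ^ 2 := by rw [hx]; ring
  have h2 : (2 : ℝ) ^ (2 * α + 1) = 2 * 2 ^ (2 * α) := by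
    rw [rpow_add two_pos, rpow_one, mul_comm]
  have h4 : ((2 : ℝ) ^ 2) ^ (α + 1) = 4 * 2 ^ (2 * α) := by
    rw [← rpow_natCast_mul zero_le_two,
      show ((2 : ℕ) : ℝ) * (α + 1) = 2 * α + 2 by push_cast; ring, rpow_add two_pos]
    norm_num [mul_comm]
  rw [f_eq hx₀ hx₁ hα, hprod, h1x, hx, div_rpow (by linarith) zero_le_two,
    div_rpow (by linarith) zero_le_two, div_rpow (by nlinarith) (by positivity), h2, h4,
    rpow_neg zero_le_two, g]
  field_simp
  ring

lemma one_le_g_of_nonneg {t : ℝ} (ht₀ : 0 ≤ t) (ht₁ : t ≤ 1) (hα : 0 ≤ α) : 1 ≤ g α t := by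
  have hu : 1 + (2 * α + 1) * t ≤ (1 + t) ^ (2 * α + 1) :=
    one_add_mul_self_le_rpow_one_add (by linarith) (by linarith)
  have hv : (1 - t) ^ (2 * α + 1) ≤ 1 - t :=
    rpow_le_self_of_le_one (by linarith) (by linarith) (by linarith)
  have huv : 1 + (α + 1) * -t ^ 2 ≤ (1 + -t ^ 2) ^ (α + 1) :=
    one_add_mul_self_le_rpow_one_add (by nlinarith) (by linarith)
  rw [← sub_eq_add_neg] at huv
  have := mul_le_mul_of_nonneg_left (sub_le_sub hu hv) ht₀
  unfold g
  nlinarith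

lemma g_neg (α t : ℝ) : g α (-t) = g α t := by
  simp only [g, sub_neg_eq_add, neg_sq, ← sub_eq_add_neg]
  ring

lemma one_le_g {t : ℝ} (ht : |t| ≤ 1) (hα : 0 ≤ α) : 1 ≤ g α t := by
  rcases le_total 0 t with h | h
  · exact one_le_g_of_nonneg h (abs_le.1 ht).2 hα
  · rw [← g_neg]
    exact one_le_g_of_nonneg (neg_nonneg.2 h) (by linarith [(abs_le.1 ht).1]) hα

lemma g_zero (α : ℝ) : g α 0 = 1 := by
  simp [g]

end PowerGap

open PowerGap in
/-- For fixed `α > 0` and `f(x) = 2[x^{α+1} + (1-x)^{α+1}]² - [x^{2α+1} + (1-x)^{2α+1}]`,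
one has `f(x) ≥ 2^{-2α}` for all `x ∈ [0,1]`, with equality at `x = 1/2`. -/
theorem stmt10 (α : ℝ) (hα : 0 < α) :
    (∀ x : ℝ, 0 ≤ x → x ≤ 1 →
      (2:ℝ) ^ (-(2*α)) ≤
        2 * (x ^ (α+1) + (1-x) ^ (α+1)) ^ 2 - (x ^ (2*α+1) + (1-x) ^ (2*α+1))) ∧
    2 * (((1:ℝ)/2) ^ (α+1) + (1-(1:ℝ)/2) ^ (α+1)) ^ 2
        - (((1:ℝ)/2) ^ (2*α+1) + (1-(1:ℝ)/2) ^ (2*α+1)) = (2:ℝ) ^ (-(2*α)) := by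
  refine ⟨fun x hx₀ hx₁ => ?_, ?_⟩
  · change _ ≤ f α x
    rw [f_eq_g hx₀ hx₁ hα.le]
    have ht : |2 * x - 1| ≤ 1 := abs_le.2 ⟨by linarith, by linarith⟩
    exact le_mul_of_one_le_right (by positivity) (one_le_g ht hα.le)
  · change f α (1 / 2) = _
    rw [f_eq_g (by norm_num) (by norm_num) hα.le]
    norm_num [g_zero]
end

section
/- Let |ψ⟩ be a pure state on a tripartite finite-dimensional Hilbert space H_A ⊗ H_B ⊗ H_C with reduced density matrices ρ_{AB}, ρ_{BC}, ρ_A, ρ_C. Then for any positive integers m, n: Tr(ρ_{AB}^m ρ_{BC}^n |ψ⟩⟨ψ|) = Tr(ρ_C^m ρ_A^n |ψ⟩⟨ψ|), and this quantity is a nonnegative real number. -/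
open Matrix

noncomputable section

/-- Reduced density matrix on `A ⊗ B` of the pure state `ψ` on `A ⊗ B ⊗ C`. -/
def rhoAB {A B C : Type*} [Fintype C] (ψ : A × B × C → ℂ) : Matrix (A × B) (A × B) ℂ :=
  fun p q => ∑ c, ψ (p.1, p.2, c) * star (ψ (q.1, q.2, c))

/-- Reduced density matrix on `B ⊗ C`. -/
def rhoBC {A B C : Type*} [Fintype A] (ψ : A × B × C → ℂ) : Matrix (B × C) (B × C) ℂ :=
  fun p q => ∑ a, ψ (a, p.1, p.2) * star (ψ (a, q.1, q.2))

/-- Reduced density matrix on `A`. -/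
def rhoA {A B C : Type*} [Fintype B] [Fintype C] (ψ : A × B × C → ℂ) : Matrix A A ℂ :=
  fun a a' => ∑ b, ∑ c, ψ (a, b, c) * star (ψ (a', b, c))

/-- Reduced density matrix on `C`. -/
def rhoC {A B C : Type*} [Fintype A] [Fintype B] (ψ : A × B × C → ℂ) : Matrix C C ℂ :=
  fun c c' => ∑ a, ∑ b, ψ (a, b, c) * star (ψ (a, b, c'))

/-- Extend an operator on `A ⊗ B` to `A ⊗ B ⊗ C` by tensoring with the identity on `C`. -/
def liftAB {A B C : Type*} [DecidableEq C] (M : Matrix (A × B) (A × B) ℂ) :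
    Matrix (A × B × C) (A × B × C) ℂ :=
  fun p q => M (p.1, p.2.1) (q.1, q.2.1) * (if p.2.2 = q.2.2 then 1 else 0)

/-- Extend an operator on `B ⊗ C` to `A ⊗ B ⊗ C` by tensoring with the identity on `A`. -/
def liftBC {A B C : Type*} [DecidableEq A] (M : Matrix (B × C) (B × C) ℂ) :
    Matrix (A × B × C) (A × B × C) ℂ :=
  fun p q => M p.2 q.2 * (if p.1 = q.1 then 1 else 0)

/-- Extend an operator on `A` to `A ⊗ B ⊗ C`. -/
def liftA {A B C : Type*} [DecidableEq B] [DecidableEq C] (M : Matrix A A ℂ) :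
    Matrix (A × B × C) (A × B × C) ℂ :=
  fun p q => M p.1 q.1 * (if p.2 = q.2 then 1 else 0)

/-- Extend an operator on `C` to `A ⊗ B ⊗ C`. -/
def liftC {A B C : Type*} [DecidableEq A] [DecidableEq B] (M : Matrix C C ℂ) :
    Matrix (A × B × C) (A × B × C) ℂ :=
  fun p q => M p.2.2 q.2.2 * (if (p.1, p.2.1) = (q.1, q.2.1) then 1 else 0)

end

/-! Read `ψ` as a matrix `Ψ` with rows indexed by `A` and columns by `B × C`. Then `ρ_A = Ψ Ψᴴ`,
`ρ_BC = (Ψᴴ Ψ)ᵀ`, and `ρ_A ⊗ 1`, `1 ⊗ ρ_BC` act on `ψ` as `Ψ ↦ ρ_A Ψ`, `Ψ ↦ Ψ ρ_BCᵀ`; so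
`(Ψ Ψᴴ)ⁿ Ψ = Ψ (Ψᴴ Ψ)ⁿ` gives `ρ_BCⁿ ψ = ρ_Aⁿ ψ`, and the cut `A × B | C` gives `ρ_ABᵐ ψ = ρ_Cᵐ ψ`.
As `ρ_ABᵐ` and `ρ_Cᵐ` are self-adjoint, `⟨ψ| ρ_ABᵐ ρ_BCⁿ |ψ⟩ = ⟨ψ| ρ_Cᵐ ρ_Aⁿ |ψ⟩`, and
`ρ_Cᵐ ρ_Aⁿ = ρ_Aⁿ ⊗ 1 ⊗ ρ_Cᵐ` is a Kronecker product of positive semidefinite matrices. -/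

open scoped Kronecker ComplexOrder

namespace Matrix

theorem trace_mul_vecMulVec {n R : Type*} [Fintype n] [CommSemiring R]
    (M : Matrix n n R) (x y : n → R) : (M * vecMulVec x y).trace = y ⬝ᵥ (M *ᵥ x) := by
  rw [mul_vecMulVec, trace_vecMulVec, dotProduct_comm]

theorem pow_mul_eq_mul_pow {m n R : Type*} [Fintype m] [Fintype n] [DecidableEq m]
    [DecidableEq n] [Semiring R] (X : Matrix m n R) (Y : Matrix n m R) (k : ℕ) :
    (X * Y) ^ k * X = X * (Y * X) ^ k := by
  induction k with
  | zero => simp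
  | succ k ih => rw [pow_succ', Matrix.mul_assoc, ih, pow_succ', ← Matrix.mul_assoc,
      ← Matrix.mul_assoc, ← Matrix.mul_assoc]

theorem IsHermitian.star_dotProduct_mulVec_congr {n R : Type*} [Fintype n] [CommRing R]
    [StarRing R] {X Y : Matrix n n R} (hX : X.IsHermitian) (hY : Y.IsHermitian) {ψ : n → R}
    (h : X *ᵥ ψ = Y *ᵥ ψ) (v : n → R) : star ψ ⬝ᵥ (X *ᵥ v) = star ψ ⬝ᵥ (Y *ᵥ v) := by
  rw [dotProduct_mulVec, dotProduct_mulVec, ← hX.eq, ← hY.eq, ← star_mulVec, ← star_mulVec, h]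

section Bipartite

variable {I J R : Type*} [Fintype I] [Fintype J]

theorem kronecker_one_mulVec_apply [DecidableEq J] [CommSemiring R] (M : Matrix I I R)
    (ψ : I × J → R) (i : I) (j : J) :
    ((M ⊗ₖ (1 : Matrix J J R)) *ᵥ ψ) (i, j) = (M * of (Function.curry ψ)) i j := by
  simp [mulVec, dotProduct, Fintype.sum_prod_type, one_apply, mul_apply]

theorem one_kronecker_mulVec_apply [DecidableEq I] [CommSemiring R] (N : Matrix J J R)
    (ψ : I × J → R) (i : I) (j : J) :
    (((1 : Matrix I I R) ⊗ₖ N) *ᵥ ψ) (i, j) = (of (Function.curry ψ) * Nᵀ) i j := by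
  simp [mulVec, dotProduct, Fintype.sum_prod_type, one_apply, mul_apply, mul_comm]

theorem kronecker_one_mulVec_eq_one_kronecker_mulVec [DecidableEq I] [DecidableEq J]
    [CommSemiring R] [StarRing R] (ψ : I × J → R) (k : ℕ) :
    (((of (Function.curry ψ) * (of (Function.curry ψ))ᴴ) ^ k) ⊗ₖ (1 : Matrix J J R)) *ᵥ ψ =
      ((1 : Matrix I I R) ⊗ₖ (((of (Function.curry ψ))ᴴ * of (Function.curry ψ))ᵀ ^ k)) *ᵥ ψ := by
  funext ⟨i, j⟩
  rw [kronecker_one_mulVec_apply, one_kronecker_mulVec_apply, ← transpose_pow,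
    transpose_transpose, pow_mul_eq_mul_pow]

end Bipartite

end Matrix

section Tripartite

variable {A B C : Type*}

theorem rhoA_eq [Fintype B] [Fintype C] (ψ : A × B × C → ℂ) :
    rhoA ψ = of (Function.curry ψ) * (of (Function.curry ψ))ᴴ := by
  ext a a'
  simp [rhoA, mul_apply, Fintype.sum_prod_type]

theorem rhoBC_eq [Fintype A] (ψ : A × B × C → ℂ) :
    rhoBC ψ = ((of (Function.curry ψ))ᴴ * of (Function.curry ψ))ᵀ := by
  ext p q
  simp [rhoBC, mul_apply, mul_comm]

theorem rhoAB_eq [Fintype C] (ψ : A × B × C → ℂ) :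
    rhoAB ψ = of (Function.curry (ψ ∘ Equiv.prodAssoc A B C)) *
      (of (Function.curry (ψ ∘ Equiv.prodAssoc A B C)))ᴴ := by
  ext p q
  simp [rhoAB, mul_apply]

theorem rhoC_eq [Fintype A] [Fintype B] (ψ : A × B × C → ℂ) :
    rhoC ψ = ((of (Function.curry (ψ ∘ Equiv.prodAssoc A B C)))ᴴ *
      of (Function.curry (ψ ∘ Equiv.prodAssoc A B C)))ᵀ := by
  ext c c'
  simp [rhoC, mul_apply, Fintype.sum_prod_type, mul_comm]

theorem liftA_eq [DecidableEq B] [DecidableEq C] (M : Matrix A A ℂ) :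
    liftA (B := B) (C := C) M = M ⊗ₖ 1 := by
  ext p q
  simp [liftA, one_apply]

theorem liftBC_eq [DecidableEq A] (M : Matrix (B × C) (B × C) ℂ) :
    liftBC M = (1 : Matrix A A ℂ) ⊗ₖ M := by
  ext p q
  simp [liftBC, one_apply, mul_comm]

theorem liftAB_eq [DecidableEq C] (M : Matrix (A × B) (A × B) ℂ) :
    liftAB M = (M ⊗ₖ (1 : Matrix C C ℂ)).submatrix (Equiv.prodAssoc A B C).symm
      (Equiv.prodAssoc A B C).symm := by
  ext p q
  simp [liftAB, one_apply]

theorem liftC_eq [DecidableEq A] [DecidableEq B] (M : Matrix C C ℂ) :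
    liftC M = ((1 : Matrix (A × B) (A × B) ℂ) ⊗ₖ M).submatrix (Equiv.prodAssoc A B C).symm
      (Equiv.prodAssoc A B C).symm := by
  ext p q
  simp [liftC, one_apply, mul_comm]

theorem liftC_eq_one_kronecker [DecidableEq A] [DecidableEq B] (M : Matrix C C ℂ) :
    liftC M = (1 : Matrix A A ℂ) ⊗ₖ ((1 : Matrix B B ℂ) ⊗ₖ M) := by
  ext ⟨a, b, c⟩ ⟨a', b', c'⟩
  by_cases ha : a = a' <;> by_cases hb : b = b' <;> simp [liftC, one_apply, ha, hb, mul_comm]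

variable [Fintype A] [Fintype B] [Fintype C]

theorem liftBC_rhoBC_pow_mulVec [DecidableEq A] [DecidableEq B] [DecidableEq C]
    (ψ : A × B × C → ℂ) (k : ℕ) :
    liftBC (rhoBC ψ ^ k) *ᵥ ψ = liftA (rhoA ψ ^ k) *ᵥ ψ := by
  rw [liftBC_eq, liftA_eq, rhoBC_eq, rhoA_eq]
  exact (kronecker_one_mulVec_eq_one_kronecker_mulVec ψ k).symm

theorem liftAB_rhoAB_pow_mulVec [DecidableEq A] [DecidableEq B] [DecidableEq C]
    (ψ : A × B × C → ℂ) (k : ℕ) :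
    liftAB (rhoAB ψ ^ k) *ᵥ ψ = liftC (rhoC ψ ^ k) *ᵥ ψ := by
  rw [liftAB_eq, liftC_eq, submatrix_mulVec_equiv, submatrix_mulVec_equiv, Equiv.symm_symm,
    rhoAB_eq, rhoC_eq, kronecker_one_mulVec_eq_one_kronecker_mulVec]

theorem posSemidef_rhoA (ψ : A × B × C → ℂ) : (rhoA ψ).PosSemidef :=
  rhoA_eq ψ ▸ posSemidef_self_mul_conjTranspose _

theorem posSemidef_rhoAB (ψ : A × B × C → ℂ) : (rhoAB ψ).PosSemidef :=
  rhoAB_eq ψ ▸ posSemidef_self_mul_conjTranspose _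

theorem posSemidef_rhoC (ψ : A × B × C → ℂ) : (rhoC ψ).PosSemidef :=
  rhoC_eq ψ ▸ (posSemidef_conjTranspose_mul_self _).transpose

theorem Matrix.PosSemidef.liftAB [DecidableEq C] {M : Matrix (A × B) (A × B) ℂ}
    (hM : M.PosSemidef) : (_root_.liftAB (C := C) M).PosSemidef :=
  liftAB_eq (C := C) M ▸ (hM.kronecker .one).submatrix _

theorem Matrix.PosSemidef.liftC [DecidableEq A] [DecidableEq B] {M : Matrix C C ℂ}
    (hM : M.PosSemidef) : (_root_.liftC (A := A) (B := B) M).PosSemidef :=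
  liftC_eq (A := A) (B := B) M ▸ (PosSemidef.one.kronecker hM).submatrix _

theorem Matrix.PosSemidef.liftC_mul_liftA [DecidableEq A] [DecidableEq B] [DecidableEq C]
    {P : Matrix C C ℂ} {Q : Matrix A A ℂ} (hP : P.PosSemidef) (hQ : Q.PosSemidef) :
    (_root_.liftC (A := A) (B := B) P * liftA Q).PosSemidef := by
  rw [liftC_eq_one_kronecker, liftA_eq, ← mul_kronecker_mul, Matrix.one_mul, Matrix.mul_one]
  exact hQ.kronecker (PosSemidef.one.kronecker hP)

end Tripartite

theorem stmt13_general {A B C : Type*} [Fintype A] [Fintype B] [Fintype C]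
    [DecidableEq A] [DecidableEq B] [DecidableEq C]
    (ψ : A × B × C → ℂ)
    (m n : ℕ) :
    (liftAB ((rhoAB ψ) ^ m) * liftBC ((rhoBC ψ) ^ n) * vecMulVec ψ (star ψ)).trace =
      (liftC ((rhoC ψ) ^ m) * liftA ((rhoA ψ) ^ n) * vecMulVec ψ (star ψ)).trace ∧
    ∃ r : ℝ, 0 ≤ r ∧
      (liftAB ((rhoAB ψ) ^ m) * liftBC ((rhoBC ψ) ^ n) * vecMulVec ψ (star ψ)).trace = (r : ℂ) := by
  have hAB := ((posSemidef_rhoAB ψ).pow m).liftAB (C := C)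
  have hC := (posSemidef_rhoC ψ).pow m
  have hA := (posSemidef_rhoA ψ).pow n
  have key : (liftAB ((rhoAB ψ) ^ m) * liftBC ((rhoBC ψ) ^ n) * vecMulVec ψ (star ψ)).trace =
      star ψ ⬝ᵥ ((liftC (rhoC ψ ^ m) * liftA (rhoA ψ ^ n)) *ᵥ ψ) := by
    rw [trace_mul_vecMulVec, ← mulVec_mulVec, liftBC_rhoBC_pow_mulVec,
      hAB.isHermitian.star_dotProduct_mulVec_congr (hC.liftC (A := A) (B := B)).isHermitian
        (liftAB_rhoAB_pow_mulVec ψ m), mulVec_mulVec]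
  obtain ⟨r, hr, hr'⟩ := RCLike.nonneg_iff_exists_ofReal.mp
    ((hC.liftC_mul_liftA hA).dotProduct_mulVec_nonneg ψ)
  exact ⟨by rw [key, trace_mul_vecMulVec], r, hr, key.trans hr'.symm⟩

/-- For a pure state `ψ` on a tripartite finite-dimensional Hilbert space and any positive
integers `m`, `n`: `Tr(ρ_{AB}^m ρ_{BC}^n |ψ⟩⟨ψ|) = Tr(ρ_C^m ρ_A^n |ψ⟩⟨ψ|)`, and this quantity
is a nonnegative real number. -/
theorem stmt13 {A B C : Type*} [Fintype A] [Fintype B] [Fintype C]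
    [DecidableEq A] [DecidableEq B] [DecidableEq C]
    (ψ : A × B × C → ℂ) (hψ : ∑ p, Complex.normSq (ψ p) = 1)
    (m n : ℕ) (hm : 0 < m) (hn : 0 < n) :
    (liftAB ((rhoAB ψ) ^ m) * liftBC ((rhoBC ψ) ^ n) * vecMulVec ψ (star ψ)).trace =
      (liftC ((rhoC ψ) ^ m) * liftA ((rhoA ψ) ^ n) * vecMulVec ψ (star ψ)).trace ∧
    ∃ r : ℝ, 0 ≤ r ∧
      (liftAB ((rhoAB ψ) ^ m) * liftBC ((rhoBC ψ) ^ n) * vecMulVec ψ (star ψ)).trace = (r : ℂ) :=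
  stmt13_general ψ m n
end

section
/- Let h be a real skew-symmetric 2n×2n matrix with eigenvalues ±iε_k (ε_k ≥ 0). Then Π_k (e^{ε_k/2} + e^{-ε_k/2}) = pf(sinh(ih)) / pf(sinh(ih/2)), whenever the right-hand side Pfaffians are nonzero; equivalently (Π_k 2cosh(ε_k/2))² = det(1 + e^{ih}). -/
/-!
The matrix `i h` is Hermitian, so the spectral theorem gives `det (1 + e^{ih}) = ∏ (1 + e^λ)`
over its real eigenvalues `λ`. The hypothesis on `det (z - h)` says that the characteristic
polynomial of `i h` is `∏ₖ (X - εₖ)(X + εₖ)`, so these eigenvalues are the `±εₖ`, and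
`(1 + e^ε)(1 + e^{-ε}) = (e^{ε/2} + e^{-ε/2})²`.
-/

open Matrix Polynomial

theorem Polynomial.prod_map_eq_of_prod_X_sub_C_eq {R M ι κ : Type*} [CommRing R] [IsDomain R]
    [CommMonoid M] [Fintype ι] [Fintype κ] {a : ι → R} {b : κ → R}
    (h : ∏ i, (X - C (a i)) = ∏ k, (X - C (b k))) (f : R → M) :
    ∏ i, f (a i) = ∏ k, f (b k) := by
  have hroots : Finset.univ.val.map a = Finset.univ.val.map b := by
    rw [← roots_multiset_prod_X_sub_C (Finset.univ.val.map a),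
      ← roots_multiset_prod_X_sub_C (Finset.univ.val.map b)]
    simp only [Multiset.map_map, Function.comp_def, Finset.prod_map_val, h]
  simpa only [Multiset.map_map, Function.comp_def, Finset.prod_map_val] using
    congrArg (fun s => (s.map f).prod) hroots

theorem Complex.one_add_exp_mul_one_add_exp_neg (x : ℂ) :
    (1 + exp x) * (1 + exp (-x)) = (exp (x / 2) + exp (-x / 2)) ^ 2 := by
  have hsq : ∀ y : ℂ, exp y = exp (y / 2) ^ 2 := fun y => by rw [← exp_nat_mul]; ring_nf
  have hprod : exp (x / 2) * exp (-(x / 2)) = 1 := by rw [← exp_add, add_neg_cancel, exp_zero]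
  rw [hsq x, hsq (-x), neg_div]
  linear_combination (exp (x / 2) * exp (-(x / 2)) - 1) * hprod

namespace Matrix

theorem isHermitian_I_smul_map_ofReal_of_transpose_eq_neg {n : Type*} {h : Matrix n n ℝ}
    (hskew : hᵀ = -h) : (Complex.I • h.map Complex.ofReal).IsHermitian := by
  ext i j
  have hij : h i j = -h j i := by simpa using congrFun (congrFun hskew j) i
  simp [hij]

theorem charpoly_I_smul_eq_of_det_sub_eq {n κ : Type*} [Fintype n] [DecidableEq n] [Fintype κ]
    {M : Matrix n n ℂ} {ε : κ → ℂ} (hcard : Fintype.card n = 2 * Fintype.card κ)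
    (hM : ∀ z : ℂ, (z • (1 : Matrix n n ℂ) - M).det = ∏ k, (z ^ 2 + ε k ^ 2)) :
    (Complex.I • M).charpoly = ∏ k, (X - C (ε k)) * (X - C (-ε k)) := by
  refine Polynomial.funext fun z => ?_
  have hfactor : scalar n z - Complex.I • M = Complex.I • ((-Complex.I * z) • 1 - M) := by
    rw [smul_sub, smul_smul, scalar_apply, ← smul_one_eq_diagonal]
    ring_nf
    simp
  rw [eval_charpoly, hfactor, det_smul, hM, hcard, pow_mul, Complex.I_sq, eval_prod,
    ← Finset.card_univ, ← Finset.prod_const, ← Finset.prod_mul_distrib]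
  refine Finset.prod_congr rfl fun k _ => ?_
  simp only [eval_mul, eval_sub, eval_X, eval_C]
  linear_combination (-z ^ 2) * Complex.I_sq

namespace IsHermitian

variable {n 𝕜 : Type*} [RCLike 𝕜] [Fintype n] [DecidableEq n] {A : Matrix n n 𝕜}

theorem det_cfc (hA : A.IsHermitian) (f : ℝ → ℝ) :
    (cfc f A).det = ∏ i, (f (hA.eigenvalues i) : 𝕜) := by
  simp [hA.cfc_eq, IsHermitian.cfc, -Unitary.conjStarAlgAut_apply]

-- `NormedSpace.exp` only sees the topology; the C⋆-norm is needed to compare it with `cfc`.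
open scoped Matrix.Norms.L2Operator in
theorem det_one_add_exp {A : Matrix n n ℂ} (hA : A.IsHermitian) :
    (1 + NormedSpace.exp A).det = ∏ i, (1 + Complex.exp (hA.eigenvalues i)) := by
  rw [← CFC.real_exp_eq_normedSpace_exp hA.isSelfAdjoint, ← cfc_const_one ℝ A,
    ← cfc_add A _ _ (by fun_prop) (by fun_prop), hA.det_cfc]
  simp [Complex.ofReal_exp]

end IsHermitian

end Matrix

theorem stmt16_general (N : ℕ) (h : Matrix (Fin (2 * N)) (Fin (2 * N)) ℝ) (hskew : hᵀ = -h)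
    (ε : Fin N → ℝ)
    (hchar : ∀ z : ℂ,
      (z • (1 : Matrix (Fin (2 * N)) (Fin (2 * N)) ℂ) - h.map Complex.ofReal).det =
        ∏ k, (z ^ 2 + (ε k : ℂ) ^ 2)) :
    (((∏ k, (Real.exp (ε k / 2) + Real.exp (-(ε k) / 2))) ^ 2 : ℝ) : ℂ) =
      (1 + NormedSpace.exp (Complex.I • h.map Complex.ofReal)).det := by
  have hA := isHermitian_I_smul_map_ofReal_of_transpose_eq_neg hskew
  have hroots : ∏ i, (X - C (hA.eigenvalues i : ℂ)) =
      ∏ s, (X - C (Sum.elim (fun k => (ε k : ℂ)) (fun k => -(ε k : ℂ)) s)) := by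
    rw [Fintype.prod_sum_type, ← Finset.prod_mul_distrib]
    exact hA.charpoly_eq.symm.trans (charpoly_I_smul_eq_of_det_sub_eq (by simp) hchar)
  rw [hA.det_one_add_exp, prod_map_eq_of_prod_X_sub_C_eq hroots (fun z => 1 + Complex.exp z),
    Fintype.prod_sum_type, ← Finset.prod_mul_distrib]
  push_cast
  rw [← Finset.prod_pow]
  exact Finset.prod_congr rfl fun k _ => (Complex.one_add_exp_mul_one_add_exp_neg _).symm

/-- Let `h` be a real skew-symmetric `2N×2N` matrix whose eigenvalues are `±iε_k` with
`ε_k ≥ 0` (expressed by the factorization of the characteristic polynomial). Then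
`(Π_k (e^{ε_k/2} + e^{-ε_k/2}))² = det(1 + e^{ih})`. -/
theorem stmt16 (N : ℕ) (h : Matrix (Fin (2 * N)) (Fin (2 * N)) ℝ) (hskew : hᵀ = -h)
    (ε : Fin N → ℝ) (hε : ∀ k, 0 ≤ ε k)
    (hchar : ∀ z : ℂ,
      (z • (1 : Matrix (Fin (2 * N)) (Fin (2 * N)) ℂ) - h.map Complex.ofReal).det =
        ∏ k, (z ^ 2 + (ε k : ℂ) ^ 2)) :
    (((∏ k, (Real.exp (ε k / 2) + Real.exp (-(ε k) / 2))) ^ 2 : ℝ) : ℂ) =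
      (1 + NormedSpace.exp (Complex.I • h.map Complex.ofReal)).det :=
  stmt16_general N h hskew ε hchar
end

section
/- Let X be an n×n complex matrix such that there exist b, γ > 0 with |X_{jk}| ≤ b e^{-γ|j-k|} for all j,k (quasidiagonal), and similarly Y with the same constants. Then for any 0 < γ' < γ, there exists b' > 0 depending only on b, γ, γ' (and not on n) such that |(XY)_{jk}| ≤ b' e^{-γ'|j-k|} for all j,k. -/
/-!
Split the decay rate as `γ = γ' + (γ - γ')`. By the triangle inequality
`e^{-γ|j-l|} e^{-γ|l-k|} ≤ e^{-γ'|j-k|} e^{-(γ-γ')|j-l|}`, so after summing over `l` the factor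
`e^{-γ'|j-k|}` comes out and what remains is bounded by the two-sided geometric series
`∑_{n ∈ ℤ} e^{-(γ-γ')|n|}`, independently of the matrix size.
-/

open Real

lemma exp_neg_mul_abs_sub_mul_le {γ γ' : ℝ} (hγ' : 0 ≤ γ') (hγ : γ' ≤ γ) (x y z : ℝ) :
    exp (-γ * |x - z|) * exp (-γ * |z - y|) ≤ exp (-γ' * |x - y|) * exp (-(γ - γ') * |x - z|) := by
  rw [← exp_add, ← exp_add, exp_le_exp]
  have htri : |x - y| ≤ |x - z| + |z - y| := abs_sub_le x z y
  nlinarith [abs_nonneg (z - y)]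

lemma summable_exp_neg_mul_abs_int {δ : ℝ} (hδ : 0 < δ) :
    Summable fun n : ℤ => exp (-δ * |(n : ℝ)|) := by
  have hgeom : Summable fun n : ℕ => exp (-δ) ^ n :=
    summable_geometric_of_lt_one (exp_pos _).le (exp_lt_one_iff.mpr (by linarith))
  refine .of_nat_of_neg (hgeom.congr fun n => ?_) (hgeom.congr fun n => ?_) <;>
    simp [← exp_nat_mul, mul_comm]

lemma sum_exp_neg_mul_abs_sub_le_tsum {δ : ℝ} (hδ : 0 < δ) (s : Finset ℤ) (m : ℤ) :
    ∑ l ∈ s, exp (-δ * |(m : ℝ) - l|) ≤ ∑' n : ℤ, exp (-δ * |(n : ℝ)|) := by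
  have hshift := (Equiv.subLeft m).tsum_eq fun n : ℤ => exp (-δ * |(n : ℝ)|)
  have hsum := (summable_exp_neg_mul_abs_int hδ).comp_injective (Equiv.subLeft m).injective
  simp only [Function.comp_def, Equiv.subLeft_apply, Int.cast_sub] at hshift hsum
  rw [← hshift]
  exact hsum.sum_le_tsum s fun _ _ => (exp_pos _).le

theorem norm_mul_apply_le_of_exp_decay {R ι : Type*} [SeminormedRing R] [Fintype ι]
    {p : ι → ℤ} (hp : Function.Injective p) {X Y : Matrix ι ι R} {a c γ γ' : ℝ}
    (hγ' : 0 ≤ γ') (hγ : γ' < γ)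
    (hX : ∀ j k, ‖X j k‖ ≤ a * exp (-γ * |(p j : ℝ) - p k|))
    (hY : ∀ j k, ‖Y j k‖ ≤ c * exp (-γ * |(p j : ℝ) - p k|)) (j k : ι) :
    ‖(X * Y) j k‖ ≤
      a * c * (∑' n : ℤ, exp (-(γ - γ') * |(n : ℝ)|)) * exp (-γ' * |(p j : ℝ) - p k|) := by
  have ha : 0 ≤ a := nonneg_of_mul_nonneg_left ((norm_nonneg _).trans (hX j j)) (exp_pos _)
  have hc : 0 ≤ c := nonneg_of_mul_nonneg_left ((norm_nonneg _).trans (hY j j)) (exp_pos _)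
  have hterm : ∀ l, ‖X j l‖ * ‖Y l k‖ ≤
      a * c * exp (-γ' * |(p j : ℝ) - p k|) * exp (-(γ - γ') * |(p j : ℝ) - p l|) := fun l =>
    calc ‖X j l‖ * ‖Y l k‖
        ≤ (a * exp (-γ * |(p j : ℝ) - p l|)) * (c * exp (-γ * |(p l : ℝ) - p k|)) :=
          mul_le_mul (hX j l) (hY l k) (norm_nonneg _) ((norm_nonneg _).trans (hX j l))
      _ = a * c * (exp (-γ * |(p j : ℝ) - p l|) * exp (-γ * |(p l : ℝ) - p k|)) := by ring
      _ ≤ a * c * (exp (-γ' * |(p j : ℝ) - p k|) * exp (-(γ - γ') * |(p j : ℝ) - p l|)) :=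
          mul_le_mul_of_nonneg_left (exp_neg_mul_abs_sub_mul_le hγ' hγ.le _ _ _)
            (mul_nonneg ha hc)
      _ = _ := by ring
  calc ‖(X * Y) j k‖
      ≤ ∑ l, ‖X j l‖ * ‖Y l k‖ := norm_sum_le_of_le _ fun l _ => norm_mul_le _ _
    _ ≤ ∑ l, a * c * exp (-γ' * |(p j : ℝ) - p k|) * exp (-(γ - γ') * |(p j : ℝ) - p l|) :=
        Finset.sum_le_sum fun l _ => hterm l
    _ = a * c * exp (-γ' * |(p j : ℝ) - p k|) *
          ∑ n ∈ Finset.univ.map ⟨p, hp⟩, exp (-(γ - γ') * |(p j : ℝ) - n|) := by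
        rw [Finset.sum_map, Finset.mul_sum]; rfl
    _ ≤ a * c * exp (-γ' * |(p j : ℝ) - p k|) * ∑' n : ℤ, exp (-(γ - γ') * |(n : ℝ)|) := by
        gcongr
        exact sum_exp_neg_mul_abs_sub_le_tsum (sub_pos.mpr hγ) _ _
    _ = _ := by ring

/-- If `X` and `Y` are quasidiagonal with constants `b, γ` (i.e. `|X_{jk}| ≤ b e^{-γ|j-k|}`),
then for any `0 < γ' < γ` there is `b' > 0` depending only on `b, γ, γ'` (not on the matrix
size) such that `|(XY)_{jk}| ≤ b' e^{-γ'|j-k|}`. -/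
theorem stmt17 (b γ γ' : ℝ) (hb : 0 < b) (hγ' : 0 < γ') (hγ : γ' < γ) :
    ∃ b' : ℝ, 0 < b' ∧ ∀ (N : ℕ) (X Y : Matrix (Fin N) (Fin N) ℂ),
      (∀ j k, ‖X j k‖ ≤ b * Real.exp (-γ * |(j : ℝ) - (k : ℝ)|)) →
      (∀ j k, ‖Y j k‖ ≤ b * Real.exp (-γ * |(j : ℝ) - (k : ℝ)|)) →
      ∀ j k, ‖(X * Y) j k‖ ≤ b' * Real.exp (-γ' * |(j : ℝ) - (k : ℝ)|) := by
  have hC : 0 < ∑' n : ℤ, exp (-(γ - γ') * |(n : ℝ)|) :=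
    (summable_exp_neg_mul_abs_int (sub_pos.mpr hγ)).tsum_pos (fun _ => (exp_pos _).le) 0
      (exp_pos _)
  refine ⟨b * b * ∑' n : ℤ, exp (-(γ - γ') * |(n : ℝ)|), by positivity, ?_⟩
  intro N X Y hX hY j k
  have hp : Function.Injective fun j : Fin N => ((j : ℕ) : ℤ) :=
    Nat.cast_injective.comp Fin.val_injective
  simpa using norm_mul_apply_le_of_exp_decay hp hγ'.le hγ (by simpa using hX) (by simpa using hY)
    j k
end
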